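/- Let n1, n2 be positive integers, W an n1 × n2 real matrix, w ∈ ℝ^{n2}, b¹ ∈ ℝ^{n1}, b² ∈ ℝ^{n2}, b³ ∈ ℝ, and consider the supervised RBM joint distribution on (x, h, y) ∈ {±1}^{n1} × {±1}^{n2} × {±1} given by Pr(X = x, H = h, Y = y) = exp( ⟨x, W h⟩ + ⟨h, w⟩ y + ⟨b¹, x⟩ + ⟨b², h⟩ + b³ y )/Z. Then for every x ∈ {±1}^{n1}, E[Y | X = x] = tanh( b³ + Σ_{j=1}^{n2} arctanh( tanh(w_j) · tanh( b²_j + Σ_{i=1}^{n1} W_{ij} x_i ) ) ). -/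

import Mathlib

open Finset Real

/-- `arctanh x = (1/2) log((1+x)/(1-x))`, the inverse hyperbolic tangent. -/
noncomputable def arctanh (x : ℝ) : ℝ := (1 / 2) * Real.log ((1 + x) / (1 - x))

/-- Map a boolean spin to `±1`. -/
def spin (b : Bool) : ℝ := if b then 1 else -1

/-- Weight `exp(⟨x, W h⟩ + ⟨h, w⟩ y + ⟨b¹, x⟩ + ⟨b², h⟩ + b³ y)` of a joint
configuration of the supervised RBM. -/
noncomputable def srbmExp {n1 n2 : ℕ} (W : Fin n1 → Fin n2 → ℝ) (w : Fin n2 → ℝ)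
    (b1 : Fin n1 → ℝ) (b2 : Fin n2 → ℝ) (b3 : ℝ)
    (x : Fin n1 → ℝ) (h : Fin n2 → ℝ) (y : ℝ) : ℝ :=
  Real.exp ((∑ i, ∑ j, x i * W i j * h j) + (∑ j, h j * w j) * y +
    (∑ i, b1 i * x i) + (∑ j, b2 j * h j) + b3 * y)

/-! Summing out the hidden layer factorizes the partition function: for fixed `x` and `y`,
`∑_h exp(⋯) = exp(⟨b¹, x⟩ + b³ y) ∏_j 2 cosh(a_j + w_j y)` with `a_j = b²_j + ∑_i W_ij x_i`.
Hence `E[Y | x] = (A - B) / (A + B)` where `A / B = e^{2 b³} ∏_j cosh(a_j + w_j) / cosh(a_j - w_j)`,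
and `(A - B) / (A + B) = tanh z` as soon as `e^{2z} = A / B`. The identity
`e^{2 arctanh(tanh u tanh v)} = cosh(v + u) / cosh(v - u)` shows that
`z = b³ + ∑_j arctanh(tanh w_j tanh a_j)` is such a `z`. -/

@[simp] theorem spin_true : spin true = 1 := rfl

@[simp] theorem spin_false : spin false = -1 := rfl

theorem tanh_eq_sub_div_add_of_exp_two_mul {z A B : ℝ} (hB : B ≠ 0)
    (h : exp (2 * z) = A / B) : tanh z = (A - B) / (A + B) := by
  have hz : exp z ^ 2 * B = A := by
    rw [← exp_nat_mul, Nat.cast_ofNat, h, div_mul_cancel₀ _ hB]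
  rw [tanh_eq, exp_neg, ← hz]
  field_simp

theorem exp_two_mul_arctanh_tanh_mul_tanh (u v : ℝ) :
    exp (2 * arctanh (tanh u * tanh v)) = cosh (v + u) / cosh (v - u) := by
  have hu := (cosh_pos u).ne'
  have hv := (cosh_pos v).ne'
  have hpos : 0 < cosh (v + u) / cosh (v - u) := div_pos (cosh_pos _) (cosh_pos _)
  suffices (1 + tanh u * tanh v) / (1 - tanh u * tanh v) = cosh (v + u) / cosh (v - u) by
    rw [arctanh, ← mul_assoc, mul_one_div_cancel two_ne_zero, one_mul, this, exp_log hpos]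
  rw [tanh_eq_sinh_div_cosh, tanh_eq_sinh_div_cosh, cosh_add, cosh_sub]
  field_simp

theorem sum_exp_sum_spin_mul {ι : Type*} [Fintype ι] [DecidableEq ι] (t : ι → ℝ) :
    ∑ ε : ι → Bool, exp (∑ j, spin (ε j) * t j) = ∏ j, 2 * cosh (t j) := by
  simp only [exp_sum]
  rw [← Fintype.prod_sum fun j s => exp (spin s * t j)]
  refine prod_congr rfl fun j _ => ?_
  simp [spin, cosh_eq, mul_div_cancel₀]

theorem srbmExp_eq_exp_mul_exp {n1 n2 : ℕ} (W : Fin n1 → Fin n2 → ℝ) (w : Fin n2 → ℝ)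
    (b1 : Fin n1 → ℝ) (b2 : Fin n2 → ℝ) (b3 : ℝ) (x : Fin n1 → ℝ) (h : Fin n2 → ℝ) (y : ℝ) :
    srbmExp W w b1 b2 b3 x h y =
      exp (∑ i, b1 i * x i + b3 * y) * exp (∑ j, h j * (b2 j + ∑ i, W i j * x i + w j * y)) := by
  have hWx : ∑ i, ∑ j, x i * W i j * h j = ∑ j, h j * ∑ i, W i j * x i := by
    rw [sum_comm]
    exact sum_congr rfl fun j _ => by rw [mul_sum]; exact sum_congr rfl fun i _ => by ring
  rw [srbmExp, ← exp_add, hWx]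
  simp only [mul_add, sum_add_distrib, sum_mul, mul_assoc, mul_comm (b2 _)]
  congr 1
  ring

theorem sum_srbmExp_spin {n1 n2 : ℕ} (W : Fin n1 → Fin n2 → ℝ) (w : Fin n2 → ℝ)
    (b1 : Fin n1 → ℝ) (b2 : Fin n2 → ℝ) (b3 : ℝ) (x : Fin n1 → ℝ) (y : ℝ) :
    ∑ ε : Fin n2 → Bool, srbmExp W w b1 b2 b3 x (fun j => spin (ε j)) y =
      exp (∑ i, b1 i * x i + b3 * y) * ∏ j, 2 * cosh (b2 j + ∑ i, W i j * x i + w j * y) := by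
  simp_rw [srbmExp_eq_exp_mul_exp, ← mul_sum, sum_exp_sum_spin_mul]

theorem srbm_label_prediction_general {n1 n2 : ℕ}
    (W : Fin n1 → Fin n2 → ℝ) (w : Fin n2 → ℝ)
    (b1 : Fin n1 → ℝ) (b2 : Fin n2 → ℝ) (b3 : ℝ)
    (x : Fin n1 → ℝ) :
    (∑ s : Bool, ∑ ε : Fin n2 → Bool,
        spin s * srbmExp W w b1 b2 b3 x (fun j => spin (ε j)) (spin s)) /
      (∑ s : Bool, ∑ ε : Fin n2 → Bool,
        srbmExp W w b1 b2 b3 x (fun j => spin (ε j)) (spin s)) =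
    Real.tanh (b3 + ∑ j,
      arctanh (Real.tanh (w j) * Real.tanh (b2 j + ∑ i, W i j * x i))) := by
  simp only [Fintype.sum_bool, ← mul_sum, sum_srbmExp_spin]
  -- an opaque `c` keeps `exp_sum` below from expanding `exp (c ± b3)`
  set c := ∑ i, b1 i * x i
  simp only [spin_true, spin_false, one_mul, neg_one_mul, mul_one, mul_neg_one, ← sub_eq_add_neg]
  symm
  refine tanh_eq_sub_div_add_of_exp_two_mul (by positivity) ?_
  simp only [mul_add, exp_add, mul_sum, exp_sum, exp_two_mul_arctanh_tanh_mul_tanh]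
  rw [prod_div_distrib, prod_mul_distrib, prod_mul_distrib, exp_sub, two_mul, exp_add]
  field_simp

/-- **Theorem (label prediction in a supervised RBM).** In the supervised RBM joint
distribution on `(x, h, y)`, for every visible configuration `x ∈ {±1}^{n1}`,
`E[Y | X = x] = tanh (b³ + ∑_j arctanh (tanh (w j) · tanh (b² j + ∑_i W i j x i)))`. -/
theorem srbm_label_prediction {n1 n2 : ℕ} (hn1 : 0 < n1) (hn2 : 0 < n2)
    (W : Fin n1 → Fin n2 → ℝ) (w : Fin n2 → ℝ)
    (b1 : Fin n1 → ℝ) (b2 : Fin n2 → ℝ) (b3 : ℝ)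
    (x : Fin n1 → ℝ) (hx : ∀ i, x i = 1 ∨ x i = -1) :
    (∑ s : Bool, ∑ ε : Fin n2 → Bool,
        spin s * srbmExp W w b1 b2 b3 x (fun j => spin (ε j)) (spin s)) /
      (∑ s : Bool, ∑ ε : Fin n2 → Bool,
        srbmExp W w b1 b2 b3 x (fun j => spin (ε j)) (spin s)) =
    Real.tanh (b3 + ∑ j,
      arctanh (Real.tanh (w j) * Real.tanh (b2 j + ∑ i, W i j * x i))) :=
  srbm_label_prediction_general W w b1 b2 b3 x
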